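/- arXiv:2202.13256 — 11 statements merged into one kernel-verified Lean document; each statement's English description precedes it below -/
import Mathlib

section
/- For every positive integer k and all natural numbers i and j, the k-th ternary digit (0-indexed) of 2^(i·u_k + j) is congruent modulo 3 to the k-th ternary digit of 2^j plus i times the 0-th ternary digit of 2^j; that is, (2^(i·2·3^(k-1) + j) / 3^k) % 3 ≡ (2^j / 3^k) % 3 + i · (2^j % 3) (mod 3). -/
/-- `2 ^ (2 * 3^n) = 1 + 3^(n+1)` up to a multiple of `3^(n+2)`. -/
lemma two_pow_unit_eq (n : ℕ) : ∃ m, 2 ^ (2 * 3 ^ n) = 1 + 3 ^ (n + 1) + m * 3 ^ (n + 2) := by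
  induction n with
  | zero => exact ⟨0, by norm_num⟩
  | succ n ih =>
    obtain ⟨m, hm⟩ := ih
    refine ⟨m + 3 ^ n * (1 + 3 * m) ^ 2 + 3 ^ (2 * n) * (1 + 3 * m) ^ 3, ?_⟩
    have h3 : 2 ^ (2 * 3 ^ (n + 1)) = (2 ^ (2 * 3 ^ n)) ^ 3 := by
      rw [show 2 * 3 ^ (n + 1) = 2 * 3 ^ n * 3 by ring, pow_mul]
    rw [h3, hm]; ring

/-- For every positive integer `k` and all naturals `i, j`, the `k`-th ternary digit
(0-indexed) of `2 ^ (i * u_k + j)`, where `u_k = 2 * 3 ^ (k - 1)`, is congruent mod 3 to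
the `k`-th ternary digit of `2 ^ j` plus `i` times the 0-th ternary digit of `2 ^ j`. -/
theorem ternary_digit_of_two_pow_add_mul_unit (k i j : ℕ) (hk : 0 < k) :
    2 ^ (i * (2 * 3 ^ (k - 1)) + j) / 3 ^ k % 3 ≡
      2 ^ j / 3 ^ k % 3 + i * (2 ^ j % 3) [MOD 3] := by
  obtain ⟨n, rfl⟩ : ∃ n, k = n + 1 := ⟨k - 1, (Nat.succ_pred_eq_of_pos hk).symm⟩
  simp only [Nat.add_sub_cancel]
  have key : 2 ^ (i * (2 * 3 ^ n) + j) ≡ 2 ^ j + (i * 2 ^ j) * 3 ^ (n + 1) [MOD 3 ^ (n + 2)] := by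
    induction i with
    | zero => simpa using Nat.ModEq.refl (2 ^ j)
    | succ i ih =>
      obtain ⟨m, hm⟩ := two_pow_unit_eq n
      have hb : 2 ^ (2 * 3 ^ n) ≡ 1 + 3 ^ (n + 1) [MOD 3 ^ (n + 2)] := by
        show _ % _ = _ % _
        rw [hm]; exact Nat.add_mul_mod_self_right _ _ _
      calc 2 ^ ((i + 1) * (2 * 3 ^ n) + j)
          = 2 ^ (2 * 3 ^ n) * 2 ^ (i * (2 * 3 ^ n) + j) := by
            rw [← pow_add]; ring_nf
        _ ≡ (1 + 3 ^ (n + 1)) * (2 ^ j + (i * 2 ^ j) * 3 ^ (n + 1)) [MOD 3 ^ (n + 2)] :=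
            hb.mul ih
        _ ≡ 2 ^ j + ((i + 1) * 2 ^ j) * 3 ^ (n + 1) [MOD 3 ^ (n + 2)] := by
            have h : (1 + 3 ^ (n + 1)) * (2 ^ j + (i * 2 ^ j) * 3 ^ (n + 1))
                = (2 ^ j + ((i + 1) * 2 ^ j) * 3 ^ (n + 1)) + (i * 2 ^ j * 3 ^ n) * 3 ^ (n + 2) := by
              ring
            rw [show ((1:ℕ) + 3 ^ (n + 1)) * (2 ^ j + (i * 2 ^ j) * 3 ^ (n + 1))
                = (2 ^ j + ((i + 1) * 2 ^ j) * 3 ^ (n + 1)) + (i * 2 ^ j * 3 ^ n) * 3 ^ (n + 2) from h]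
            show _ % _ = _ % _
            exact Nat.add_mul_mod_self_right _ _ _
  have digit : 2 ^ (i * (2 * 3 ^ n) + j) / 3 ^ (n + 1) % 3
      = (2 ^ j + (i * 2 ^ j) * 3 ^ (n + 1)) / 3 ^ (n + 1) % 3 := by
    rw [← Nat.mod_mul_right_div_self, ← Nat.mod_mul_right_div_self,
      show (3:ℕ) ^ (n + 1) * 3 = 3 ^ (n + 2) by ring, key]
  rw [digit, Nat.add_mul_div_right _ _ (pow_pos (by norm_num) (n + 1))]
  exact (Nat.mod_modEq _ 3).trans
    (((Nat.mod_modEq _ 3).symm).add ((Nat.mod_modEq (2 ^ j) 3).symm.mul_left i))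
end

section
/- For every positive integer k and every natural number i, 2^(i·2·3^(k-1)) ≡ i·3^k + 1 (mod 3^(k+1)). -/
lemma cube_lift (n : ℕ) (a b : ℤ) (hn : 0 < n) (h : a ≡ b [ZMOD 3 ^ n]) :
    a ^ 3 ≡ b ^ 3 [ZMOD 3 ^ (n + 1)] := by
  have hd : (3:ℤ) ^ n ∣ a - b := Int.ModEq.dvd h.symm
  have h3 : (3:ℤ) ∣ a - b := dvd_trans (dvd_pow_self 3 hn.ne') hd
  obtain ⟨c, hc⟩ := h3
  have key : a ^ 3 - b ^ 3 = (a - b) * (a^2 + a*b + b^2) := by ring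
  have hdvd : (3:ℤ) ^ (n+1) ∣ a ^ 3 - b ^ 3 := by
    rw [key, pow_succ]
    apply mul_dvd_mul hd
    have : a^2 + a*b + b^2 = (a-b)*(a+2*b) + 3 * b^2 := by ring
    rw [this, hc]
    exact dvd_add ⟨c * (a + 2*b), by ring⟩ ⟨b^2, rfl⟩
  exact (Int.modEq_iff_dvd.mpr hdvd).symm

lemma base_pow (k : ℕ) (hk : 0 < k) :
    (2:ℤ) ^ (2 * 3 ^ (k - 1)) ≡ 1 + 3 ^ k [ZMOD 3 ^ (k + 1)] := by
  induction k with
  | zero => exact absurd hk (by simp)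
  | succ n ih =>
    rcases Nat.eq_zero_or_pos n with h0 | hn
    · subst h0; decide
    · obtain ⟨m, rfl⟩ := Nat.exists_eq_succ_of_ne_zero hn.ne'
      have ih' : (2:ℤ) ^ (2 * 3 ^ m) ≡ 1 + 3 ^ (m+1) [ZMOD 3 ^ (m + 2)] := by
        simpa using ih hn
      have h1 : (2:ℤ) ^ (2 * 3 ^ (m+1)) = ((2:ℤ) ^ (2 * 3 ^ m)) ^ 3 := by
        rw [← pow_mul]; congr 1; rw [pow_succ]; ring
      have hcube := cube_lift (m+2) _ _ (by positivity) ih'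
      have expand : ((1:ℤ) + 3 ^ (m+1)) ^ 3
          = 1 + 3 ^ (m+2) + 3 ^ (m+3) * (3 ^ m + 3 ^ m * 3 ^ m) := by
        have e1 : (3:ℤ) ^ (m+1) = 3 ^ m * 3 := pow_succ 3 m
        have e2 : (3:ℤ) ^ (m+2) = 3 ^ m * 3 * 3 := by rw [pow_succ, e1]
        have e3 : (3:ℤ) ^ (m+3) = 3 ^ m * 3 * 3 * 3 := by rw [pow_succ, e2]
        rw [e1, e2, e3]; ring
      have h2 : ((1:ℤ) + 3 ^ (m+1)) ^ 3 ≡ 1 + 3 ^ (m+2) [ZMOD 3 ^ (m + 3)] := by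
        rw [expand]
        exact (Int.modEq_iff_dvd.mpr ⟨3 ^ m + 3 ^ m * 3 ^ m, by ring⟩).symm
      have := hcube.trans h2
      simpa [h1, Nat.add_sub_cancel, show m + 1 + 2 = m + 3 from rfl] using this

lemma binomial_approx (c : ℤ) (i : ℕ) : (1 + c) ^ i ≡ 1 + i * c [ZMOD c ^ 2] := by
  induction i with
  | zero => simp
  | succ m ih =>
    have : (1 + c) ^ (m + 1) = (1 + c) ^ m * (1 + c) := pow_succ _ _
    rw [this]
    calc (1 + c) ^ m * (1 + c) ≡ (1 + m * c) * (1 + c) [ZMOD c ^ 2] :=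
          ih.mul_right _
      _ ≡ 1 + (m + 1 : ℕ) * c [ZMOD c ^ 2] := by
          have : ((1:ℤ) + m * c) * (1 + c) = 1 + (m + 1 : ℕ) * c + c^2 * m := by
            push_cast; ring
          rw [this]
          simpa using (Int.modEq_iff_dvd.mpr ⟨-(m:ℤ), by ring⟩)

/-- For every positive integer `k` and every natural `i`,
`2 ^ (i * 2 * 3 ^ (k - 1)) ≡ i * 3 ^ k + 1 [MOD 3 ^ (k + 1)]`. -/
theorem two_pow_mul_unit_modEq (k i : ℕ) (hk : 0 < k) :
    2 ^ (i * (2 * 3 ^ (k - 1))) ≡ i * 3 ^ k + 1 [MOD 3 ^ (k + 1)] := by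
  rw [← Int.natCast_modEq_iff]
  push_cast
  have h1 : (2:ℤ) ^ (i * (2 * 3 ^ (k - 1))) = ((2:ℤ) ^ (2 * 3 ^ (k-1))) ^ i := by
    rw [← pow_mul, mul_comm]
  rw [h1]
  have hA : ((2:ℤ) ^ (2 * 3 ^ (k-1))) ^ i ≡ (1 + 3^k) ^ i [ZMOD 3 ^ (k+1)] :=
    (base_pow k hk).pow i
  have hB : ((1:ℤ) + 3^k) ^ i ≡ 1 + i * 3^k [ZMOD 3 ^ (k+1)] := by
    have := binomial_approx ((3:ℤ)^k) i
    have hdvd : ((3:ℤ) ^ (k+1)) ∣ ((3:ℤ)^k) ^ 2 := by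
      rw [← pow_mul]; exact pow_dvd_pow 3 (by omega)
    exact this.of_dvd hdvd
  have := hA.trans hB
  calc ((2:ℤ) ^ (2 * 3 ^ (k-1))) ^ i ≡ 1 + i * 3^k [ZMOD 3 ^ (k+1)] := this
    _ = i * 3^k + 1 := by ring
end

section
/- For every positive integer k, 2^(4·3^(k-1)) ≡ 2·3^k + 1 (mod 3^(k+1)); in particular, the k-th ternary digit (0-indexed) of 2^(2·u_k), where u_k := 2·3^(k-1), equals 2. -/
/-!
Since `2 ^ (4 * 3 ^ (k - 1)) = 16 ^ (3 ^ (k - 1))` and `16 = 1 + 2 * 3 + 9`, the congruence follows by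
iterating the cubing rule `(1 + c 3ⁿ + 3ⁿ⁺¹ t)³ ≡ 1 + c 3ⁿ⁺¹ (mod 3ⁿ⁺²)`, valid for `n ≥ 1`.
The residue `2 * 3 ^ k + 1` is below `3 ^ (k + 1)`, so it is the remainder, whose `k`-th digit is `2`.
-/

namespace Int

theorem pow_three_modEq_one_add_mul_three_pow {x c : ℤ} {n : ℕ} (hn : 1 ≤ n)
    (h : x ≡ 1 + c * 3 ^ n [ZMOD 3 ^ (n + 1)]) :
    x ^ 3 ≡ 1 + c * 3 ^ (n + 1) [ZMOD 3 ^ (n + 2)] := by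
  obtain ⟨m, rfl⟩ : ∃ m, n = m + 1 := ⟨n - 1, by omega⟩
  obtain ⟨t, ht⟩ := (Int.modEq_iff_dvd.mp h.symm)
  have hx : x = 1 + 3 ^ (m + 1) * (c + 3 * t) := by linear_combination ht
  refine (Int.modEq_iff_dvd.mpr ?_).symm
  rw [hx]
  exact ⟨t + 3 ^ m * (c + 3 * t) ^ 2 + 3 ^ (2 * m) * (c + 3 * t) ^ 3, by ring⟩

theorem pow_three_pow_modEq_one_add_mul_three_pow {x c : ℤ} {n : ℕ} (hn : 1 ≤ n)
    (h : x ≡ 1 + c * 3 ^ n [ZMOD 3 ^ (n + 1)]) (j : ℕ) :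
    x ^ 3 ^ j ≡ 1 + c * 3 ^ (n + j) [ZMOD 3 ^ (n + j + 1)] := by
  induction j with
  | zero => simpa using h
  | succ j ih =>
    rw [pow_succ 3 j, pow_mul, ← add_assoc]
    exact pow_three_modEq_one_add_mul_three_pow (by omega) ih

end Int

namespace Nat

theorem div_pow_mod_eq_of_modEq {a b d r k : ℕ} (hd : d < b) (hr : r < b ^ k)
    (h : a ≡ d * b ^ k + r [MOD b ^ (k + 1)]) : a / b ^ k % b = d := by
  have hlt : d * b ^ k + r < b ^ (k + 1) := by
    calc d * b ^ k + r < (d + 1) * b ^ k := by nlinarith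
      _ ≤ b * b ^ k := Nat.mul_le_mul_right _ hd
      _ = b ^ (k + 1) := by ring
  rw [← Nat.mod_mul_right_div_self, ← pow_succ, h, Nat.mod_eq_of_lt hlt,
    Nat.add_comm, Nat.add_mul_div_right _ _ (Nat.pow_pos (by omega)), Nat.div_eq_of_lt hr, Nat.zero_add]

end Nat

/-- For every positive integer `k`, `2 ^ (4 * 3 ^ (k - 1)) ≡ 2 * 3 ^ k + 1 [MOD 3 ^ (k + 1)]`;
in particular, the `k`-th ternary digit (0-indexed) of `2 ^ (2 * u_k)`,
where `u_k := 2 * 3 ^ (k - 1)`, equals `2`. -/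
theorem two_pow_double_unit_modEq (k : ℕ) (hk : 0 < k) :
    2 ^ (4 * 3 ^ (k - 1)) ≡ 2 * 3 ^ k + 1 [MOD 3 ^ (k + 1)] ∧
      2 ^ (2 * (2 * 3 ^ (k - 1))) / 3 ^ k % 3 = 2 := by
  have hcong : 2 ^ (4 * 3 ^ (k - 1)) ≡ 2 * 3 ^ k + 1 [MOD 3 ^ (k + 1)] := by
    have h16 : (16 : ℤ) ≡ 1 + 2 * 3 ^ 1 [ZMOD 3 ^ (1 + 1)] := by decide
    have := Int.pow_three_pow_modEq_one_add_mul_three_pow le_rfl h16 (k - 1)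
    rw [show 1 + (k - 1) = k by omega, show (16 : ℤ) = 2 ^ 4 by norm_num, ← pow_mul,
      add_comm (1 : ℤ)] at this
    exact_mod_cast this
  refine ⟨hcong, Nat.div_pow_mod_eq_of_modEq (by norm_num) (Nat.one_lt_pow hk.ne' (by norm_num)) ?_⟩
  rwa [← mul_assoc]
end

section
/- For every positive integer k and every natural number j, the three values (2^(j + i·2·3^(k-1)) / 3^k) % 3, for i = 0, 1, 2, are pairwise distinct; hence as i ranges over {0, 1, 2}, the k-th ternary digit (0-indexed) of 2^(j + i·u_k) takes each of the values 0, 1, 2 exactly once, where u_k := 2·3^(k-1). -/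
lemma two_pow_key (k : ℕ) : ∃ c, ¬ 3 ∣ c ∧ 2 ^ (2 * 3 ^ k) = 1 + c * 3 ^ (k + 1) := by
  induction k with
  | zero => exact ⟨1, by norm_num⟩
  | succ n ih =>
    obtain ⟨c, hc, h⟩ := ih
    refine ⟨c + 3 * (c ^ 2 * 3 ^ n + c ^ 3 * (3 ^ n) ^ 2), by omega, ?_⟩
    have h1 : 2 * 3 ^ (n + 1) = (2 * 3 ^ n) * 3 := by ring
    rw [h1, pow_mul, h]
    have h2 : (3:ℕ) ^ (n + 1) = 3 * 3 ^ n := by ring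
    have h3 : (3:ℕ) ^ (n + 1 + 1) = 9 * 3 ^ n := by ring
    rw [h2, h3]; ring

lemma digit_step (k n c : ℕ) (hn : ¬ 3 ∣ n) (hc : ¬ 3 ∣ c) :
    (n * (1 + c * 3 ^ k)) / 3 ^ k % 3 ≠ n / 3 ^ k % 3 := by
  have h1 : n * (1 + c * 3 ^ k) = n + (n * c) * 3 ^ k := by ring
  rw [h1, Nat.add_mul_div_right _ _ (pow_pos (by norm_num) k)]
  have hnc : ¬ 3 ∣ n * c := by
    intro h
    rcases (Nat.Prime.dvd_mul (by norm_num)).mp h with h | h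
    · exact hn h
    · exact hc h
  omega

/-- For every positive integer `k` and every natural `j`, the three values
`2 ^ (j + i * u_k) / 3 ^ k % 3` for `i = 0, 1, 2` (with `u_k := 2 * 3 ^ (k - 1)`) are
pairwise distinct; hence as `i` ranges over `{0, 1, 2}`, the `k`-th ternary digit
(0-indexed) of `2 ^ (j + i * u_k)` takes each of the values `0`, `1`, `2` exactly once. -/
theorem ternary_digit_pairwise_distinct (k j : ℕ) (hk : 0 < k) :
    (∀ i₁ i₂ : ℕ, i₁ < 3 → i₂ < 3 → i₁ ≠ i₂ →
      2 ^ (j + i₁ * (2 * 3 ^ (k - 1))) / 3 ^ k % 3 ≠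
        2 ^ (j + i₂ * (2 * 3 ^ (k - 1))) / 3 ^ k % 3) ∧
    (∀ d < 3, ∃! i : ℕ, i < 3 ∧ 2 ^ (j + i * (2 * 3 ^ (k - 1))) / 3 ^ k % 3 = d) := by
  set u := 2 * 3 ^ (k - 1) with hu
  obtain ⟨c, hc, hpow⟩ := two_pow_key (k - 1)
  have hk1 : k - 1 + 1 = k := by omega
  rw [hk1] at hpow
  -- the two-step constant
  have h3k : (3:ℕ) ∣ c ^ 2 * 3 ^ k := Dvd.dvd.mul_left (dvd_pow_self 3 hk.ne') _
  have hc2 : ¬ 3 ∣ (2 * c + c ^ 2 * 3 ^ k) := by omega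
  have hpow2 : 2 ^ (2 * u) = 1 + (2 * c + c ^ 2 * 3 ^ k) * 3 ^ k := by
    have : 2 ^ (2 * u) = (2 ^ u) ^ 2 := by rw [← pow_mul]; ring_nf
    rw [this, hpow]; ring
  have hnd : ∀ m : ℕ, ¬ 3 ∣ 2 ^ m := by
    intro m h
    have := Nat.Prime.dvd_of_dvd_pow Nat.prime_three h
    omega
  -- step lemma specialized
  have hD : ∀ a t c' : ℕ, ¬ 3 ∣ c' → 2 ^ (t * u) = 1 + c' * 3 ^ k →
      2 ^ (j + (a + t) * u) / 3 ^ k % 3 ≠ 2 ^ (j + a * u) / 3 ^ k % 3 := by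
    intro a t c' hc' hp
    have h1 : j + (a + t) * u = (j + a * u) + t * u := by ring
    rw [h1, pow_add, hp]
    exact digit_step k _ c' (hnd _) hc'
  have d10 : 2 ^ (j + 1 * u) / 3 ^ k % 3 ≠ 2 ^ (j + 0 * u) / 3 ^ k % 3 := by
    simpa using hD 0 1 c hc (by rw [one_mul, hpow])
  have d20 : 2 ^ (j + 2 * u) / 3 ^ k % 3 ≠ 2 ^ (j + 0 * u) / 3 ^ k % 3 := by
    simpa using hD 0 2 _ hc2 hpow2
  have d21 : 2 ^ (j + 2 * u) / 3 ^ k % 3 ≠ 2 ^ (j + 1 * u) / 3 ^ k % 3 := by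
    simpa using hD 1 1 c hc (by rw [one_mul, hpow])
  constructor
  · intro i₁ i₂ h1 h2 hne
    interval_cases i₁ <;> interval_cases i₂ <;>
      first
        | exact absurd rfl hne
        | exact d10 | exact d20 | exact d21
        | exact d10.symm | exact d20.symm | exact d21.symm
  · intro d hd
    have b0 : 2 ^ (j + 0 * u) / 3 ^ k % 3 < 3 := Nat.mod_lt _ (by norm_num)
    have b1 : 2 ^ (j + 1 * u) / 3 ^ k % 3 < 3 := Nat.mod_lt _ (by norm_num)
    have b2 : 2 ^ (j + 2 * u) / 3 ^ k % 3 < 3 := Nat.mod_lt _ (by norm_num)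
    have hex : 2 ^ (j + 0 * u) / 3 ^ k % 3 = d ∨ 2 ^ (j + 1 * u) / 3 ^ k % 3 = d ∨
        2 ^ (j + 2 * u) / 3 ^ k % 3 = d := by omega
    rcases hex with h | h | h
    · exact ⟨0, ⟨by norm_num, h⟩, by rintro y ⟨hy, hDy⟩; interval_cases y <;> omega⟩
    · exact ⟨1, ⟨by norm_num, h⟩, by rintro y ⟨hy, hDy⟩; interval_cases y <;> omega⟩
    · exact ⟨2, ⟨by norm_num, h⟩, by rintro y ⟨hy, hDy⟩; interval_cases y <;> omega⟩
end

section
/- For every positive integer n, the ternary representation of 2^n contains no digit 1 if and only if the ternary representation of 2^(n-1) contains no digit 2; that is, (∀ i, (2^n / 3^i) % 3 ≠ 1) ↔ (∀ i, (2^(n-1) / 3^i) % 3 ≠ 2). -/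
/-- Splitting `2*a / 3^i` into digit part plus carry. -/
lemma two_mul_div_pow (a i : ℕ) :
    2 * a / 3 ^ i = 2 * (a / 3 ^ i) + 2 * (a % 3 ^ i) / 3 ^ i := by
  have h3 : (0:ℕ) < 3 ^ i := by positivity
  have e : 2 * a = 2 * (a % 3 ^ i) + 2 * (a / 3 ^ i) * 3 ^ i := by
    conv_lhs => rw [← Nat.mod_add_div a (3 ^ i)]
    ring
  rw [e, Nat.add_mul_div_right _ _ h3, Nat.add_comm]

lemma key (a : ℕ) :
    (∀ i : ℕ, 2 * a / 3 ^ i % 3 ≠ 1) ↔ (∀ i : ℕ, a / 3 ^ i % 3 ≠ 2) := by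
  have hmod : ∀ i : ℕ, a % 3 ^ (i + 1) = a % 3 ^ i + 3 ^ i * (a / 3 ^ i % 3) := by
    intro i
    rw [pow_succ, Nat.mod_mul]
  have step : ∀ i : ℕ, 2 * (a % 3 ^ i) < 3 ^ i → a / 3 ^ i % 3 ≤ 1 →
      2 * (a % 3 ^ (i + 1)) < 3 ^ (i + 1) := by
    intro i hr hd1
    have hle : 3 ^ i * (a / 3 ^ i % 3) ≤ 3 ^ i * 1 := Nat.mul_le_mul_left _ hd1
    rw [hmod i, pow_succ]
    nlinarith
  constructor
  · intro h
    have main : ∀ i : ℕ, 2 * (a % 3 ^ i) < 3 ^ i ∧ a / 3 ^ i % 3 ≠ 2 := by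
      intro i
      induction i with
      | zero =>
        refine ⟨by simp [Nat.mod_one], ?_⟩
        have h0 := h 0
        simp only [pow_zero, Nat.div_one] at h0 ⊢
        omega
      | succ i ih =>
        obtain ⟨hr, hd⟩ := ih
        have hd3 : a / 3 ^ i % 3 < 3 := Nat.mod_lt _ (by norm_num)
        have hr' : 2 * (a % 3 ^ (i + 1)) < 3 ^ (i + 1) := step i hr (by omega)
        refine ⟨hr', ?_⟩
        have hs := two_mul_div_pow a (i + 1)
        rw [Nat.div_eq_of_lt hr'] at hs
        have h1 := h (i + 1)
        rw [hs] at h1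
        have hd3' : a / 3 ^ (i + 1) % 3 < 3 := Nat.mod_lt _ (by norm_num)
        omega
    exact fun i => (main i).2
  · intro h
    have main : ∀ i : ℕ, 2 * (a % 3 ^ i) < 3 ^ i := by
      intro i
      induction i with
      | zero => simp [Nat.mod_one]
      | succ i ih =>
        have hd := h i
        have hd3 : a / 3 ^ i % 3 < 3 := Nat.mod_lt _ (by norm_num)
        exact step i ih (by omega)
    intro i
    have hs := two_mul_div_pow a i
    rw [Nat.div_eq_of_lt (main i)] at hs
    rw [hs]
    have hd := h i
    have hd3 : a / 3 ^ i % 3 < 3 := Nat.mod_lt _ (by norm_num)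
    omega

/-- For every positive integer `n`, the ternary representation of `2 ^ n` contains no digit `1`
if and only if the ternary representation of `2 ^ (n - 1)` contains no digit `2`. -/
theorem two_pow_no_one_iff_pred_no_two (n : ℕ) (hn : 0 < n) :
    (∀ i : ℕ, 2 ^ n / 3 ^ i % 3 ≠ 1) ↔ (∀ i : ℕ, 2 ^ (n - 1) / 3 ^ i % 3 ≠ 2) := by
  have hpow : 2 ^ n = 2 * 2 ^ (n - 1) := by
    rw [← pow_succ']
    congr 1
    omega
  rw [hpow]
  exact key (2 ^ (n - 1))
end

section
/- For every positive integer n and every natural number k, the last k ternary digits of 2^n contain no digit 1 if and only if the last k ternary digits of 2^(n-1) contain no digit 2; that is, (∀ i < k, (2^n / 3^i) % 3 ≠ 1) ↔ (∀ i < k, (2^(n-1) / 3^i) % 3 ≠ 2). -/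
private lemma bound3 (m : ℕ) : ∀ i, (∀ j < i, m / 3 ^ j % 3 ≠ 2) → 2 * (m % 3 ^ i) < 3 ^ i := by
  intro i
  induction i with
  | zero => simp [Nat.mod_one]
  | succ i ih =>
    intro h
    have h1 : 2 * (m % 3 ^ i) < 3 ^ i := ih fun j hj => h j (by omega)
    have hd : m / 3 ^ i % 3 ≠ 2 := h i (by omega)
    have hd3 : m / 3 ^ i % 3 < 3 := Nat.mod_lt _ (by norm_num)
    have hd1 : m / 3 ^ i % 3 ≤ 1 := by omega
    have hmod : m % 3 ^ (i + 1) = m % 3 ^ i + 3 ^ i * (m / 3 ^ i % 3) := by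
      rw [pow_succ, Nat.mod_mul]
    have hdm : 3 ^ i * (m / 3 ^ i % 3) ≤ 3 ^ i * 1 := Nat.mul_le_mul_left _ hd1
    rw [hmod, pow_succ]
    linarith

private lemma digit_double (m i : ℕ) (h : ∀ j < i, m / 3 ^ j % 3 ≠ 2) :
    2 * m / 3 ^ i % 3 = 2 * (m / 3 ^ i % 3) % 3 := by
  set t := 3 ^ i with ht
  have htpos : 0 < t := pow_pos (by norm_num) i
  have hr : 2 * (m % t) < t := bound3 m i h
  set d := m / t % 3 with hdd
  have hd3 : d < 3 := Nat.mod_lt _ (by norm_num)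
  have hdig : 2 * m / t % 3 = 2 * m % (t * 3) / t := by
    rw [Nat.mod_mul_right_div_self]
  have hm : m % (t * 3) = m % t + t * d := Nat.mod_mul
  have hm' : m = t * 3 * (m / (t * 3)) + (m % t + t * d) := by
    rw [← hm]; exact (Nat.div_add_mod m (t * 3)).symm
  have h2e : 2 * m = (2 * (m % t) + t * (2 * d)) + t * 3 * (2 * (m / (t * 3))) := by
    conv_lhs => rw [hm']
    ring
  have h2m : 2 * m % (t * 3) = (2 * (m % t) + t * (2 * d)) % (t * 3) := by
    rw [h2e, Nat.add_mul_mod_self_left]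
  rcases Nat.lt_or_ge d 2 with hd | hd
  · -- d ≤ 1, no carry
    have hlt : 2 * (m % t) + t * (2 * d) < t * 3 := by nlinarith
    rw [hdig, h2m, Nat.mod_eq_of_lt hlt, Nat.add_mul_div_left _ _ htpos,
      Nat.div_eq_of_lt hr]
    omega
  · have hd2 : d = 2 := by omega
    have hre : 2 * (m % t) + t * (2 * d) = (2 * (m % t) + t) + t * 3 := by
      rw [hd2]; ring
    have hlt : 2 * (m % t) + t < t * 3 := by omega
    rw [hdig, h2m, hre, Nat.add_mod_right, Nat.mod_eq_of_lt hlt,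
      Nat.add_div_right _ htpos, Nat.div_eq_of_lt hr, hd2]

private lemma main_lemma3 (m k : ℕ) :
    (∀ i < k, 2 * m / 3 ^ i % 3 ≠ 1) ↔ (∀ i < k, m / 3 ^ i % 3 ≠ 2) := by
  constructor
  · intro h
    by_contra hc
    push_neg at hc
    obtain ⟨i, hik, hi⟩ := hc
    have hex : ∃ j, m / 3 ^ j % 3 = 2 := ⟨i, hi⟩
    have hj2 : m / 3 ^ (Nat.find hex) % 3 = 2 := Nat.find_spec hex
    have hjmin : ∀ l < Nat.find hex, m / 3 ^ l % 3 ≠ 2 := fun l hl => Nat.find_min hex hl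
    have hjk : Nat.find hex < k := lt_of_le_of_lt (Nat.find_min' hex hi) hik
    have hdd := digit_double m (Nat.find hex) hjmin
    rw [hj2] at hdd
    exact h _ hjk (by omega)
  · intro h i hik
    have hdd := digit_double m i (fun j hj => h j (by omega))
    have hd : m / 3 ^ i % 3 ≠ 2 := h i hik
    have hd3 : m / 3 ^ i % 3 < 3 := Nat.mod_lt _ (by norm_num)
    omega

/-- For every positive integer `n` and every natural `k`, the last `k` ternary digits of
`2 ^ n` contain no digit `1` if and only if the last `k` ternary digits of `2 ^ (n - 1)`
contain no digit `2`. -/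
theorem two_pow_trailing_no_one_iff_pred_trailing_no_two (n k : ℕ) (hn : 0 < n) :
    (∀ i < k, 2 ^ n / 3 ^ i % 3 ≠ 1) ↔ (∀ i < k, 2 ^ (n - 1) / 3 ^ i % 3 ≠ 2) := by
  have h2 : 2 ^ n = 2 * 2 ^ (n - 1) := by
    conv_lhs => rw [show n = (n - 1) + 1 by omega]
    rw [pow_succ']
  rw [h2]
  exact main_lemma3 _ k
end

section
/- For every digit χ ∈ {0, 1, 2} and every positive integer k, there exists a natural number n such that 2^n ≥ 3^(k-1) (so that 2^n has at least k ternary digits) and the digit χ occurs nowhere in the last k ternary digits of 2^n, i.e., (2^n / 3^i) % 3 ≠ χ for all i < k. -/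
/-!
By lifting the exponent, `4 ^ 3 ^ (k - 1) = 1 + 3 ^ k * m` with `3 ∤ m`. Multiplying `2 ^ n`
by this power of `2` adds `2 ^ n * m * 3 ^ k` to it: the last `k` ternary digits stay put while the
`k`-th digit changes, since `3 ∤ 2 ^ n * m`. So the last `k` digits of powers of two can be made
to avoid `χ` one digit at a time, and a final such multiplication makes `2 ^ n` large.
-/

theorem Nat.add_mul_pow_div_pow_mod_of_lt {b i k : ℕ} (hb : 0 < b) (a c : ℕ) (hi : i < k) :
    (a + c * b ^ k) / b ^ i % b = a / b ^ i % b := by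
  have hsplit : c * b ^ k = c * b ^ (k - i - 1) * b * b ^ i := by
    rw [mul_assoc, mul_assoc, ← pow_succ', ← pow_add, Nat.sub_sub, Nat.sub_add_cancel hi]
  rw [hsplit, Nat.add_mul_div_right _ _ (pow_pos hb i), Nat.add_mul_mod_self_right]

theorem Nat.add_mul_pow_div_pow_mod_ne {b k c : ℕ} (hb : 0 < b) (a : ℕ) (hc : ¬b ∣ c) :
    (a + c * b ^ k) / b ^ k % b ≠ a / b ^ k % b := by
  rw [Nat.add_mul_div_right _ _ (pow_pos hb k)]
  intro h
  have hmod : a / b ^ k + c ≡ a / b ^ k + 0 [MOD b] := by rwa [add_zero]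
  exact hc (Nat.modEq_zero_iff_dvd.mp (Nat.ModEq.add_left_cancel' _ hmod))

theorem exists_two_pow_eq_one_add_three_pow_mul (k : ℕ) :
    ∃ d m : ℕ, 2 ^ d = 1 + 3 ^ k * m ∧ ¬3 ∣ m := by
  cases k with
  | zero => exact ⟨1, 1, by norm_num, by norm_num⟩
  | succ k =>
    -- lifting the exponent: `v₃ (4 ^ 3 ^ k - 1) = v₃ (4 - 1) + v₃ (3 ^ k)`
    have hval : padicValNat 3 (4 ^ 3 ^ k - 1) = k + 1 := by
      have := padicValNat.pow_sub_pow (p := 3) (x := 4) (y := 1) (by decide) (by norm_num)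
        (by norm_num) (by norm_num) (n := 3 ^ k) (by positivity)
      simpa [padicValNat.prime_pow, add_comm] using this
    have hone : 1 < 4 ^ 3 ^ k := Nat.one_lt_pow (by positivity) (by norm_num)
    obtain ⟨m, hm⟩ : 3 ^ (k + 1) ∣ 4 ^ 3 ^ k - 1 := hval ▸ pow_padicValNat_dvd
    refine ⟨2 * 3 ^ k, m, by rw [pow_mul]; norm_num; omega, ?_⟩
    rintro ⟨j, rfl⟩
    have hnot := pow_succ_padicValNat_not_dvd (p := 3) (n := 4 ^ 3 ^ k - 1) (by omega)
    exact hnot (hval ▸ ⟨j, by rw [hm]; ring⟩)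

theorem two_pow_add_eq_add_mul_three_pow {d k m : ℕ} (hd : 2 ^ d = 1 + 3 ^ k * m) (n : ℕ) :
    2 ^ (n + d) = 2 ^ n + 2 ^ n * m * 3 ^ k := by
  rw [pow_add, hd]; ring

theorem exists_two_pow_trailing_digits_ne (χ k : ℕ) :
    ∃ n, ∀ i < k, 2 ^ n / 3 ^ i % 3 ≠ χ := by
  induction k with
  | zero => exact ⟨0, by simp⟩
  | succ k ih =>
    obtain ⟨n, hn⟩ := ih
    simp only [Nat.forall_lt_succ_right]
    by_cases hχ : 2 ^ n / 3 ^ k % 3 = χ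
    · obtain ⟨d, m, hd, hm⟩ := exists_two_pow_eq_one_add_three_pow_mul k
      have hnm : ¬3 ∣ 2 ^ n * m := by
        intro h
        rcases Nat.prime_three.dvd_mul.mp h with h | h
        · have := Nat.prime_three.dvd_of_dvd_pow h
          norm_num at this
        · exact hm h
      refine ⟨n + d, fun i hi => ?_, ?_⟩
      · rw [two_pow_add_eq_add_mul_three_pow hd,
          Nat.add_mul_pow_div_pow_mod_of_lt three_pos _ _ hi]
        exact hn i hi
      · rw [two_pow_add_eq_add_mul_three_pow hd, ← hχ]
        exact Nat.add_mul_pow_div_pow_mod_ne three_pos _ hnm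
    · exact ⟨n, hn, hχ⟩

theorem exists_two_pow_avoiding_digit_in_trailing_general (χ k : ℕ) :
    ∃ n : ℕ, 3 ^ (k - 1) ≤ 2 ^ n ∧ ∀ i < k, 2 ^ n / 3 ^ i % 3 ≠ χ := by
  obtain ⟨n, hn⟩ := exists_two_pow_trailing_digits_ne χ k
  obtain ⟨d, m, hd, hm⟩ := exists_two_pow_eq_one_add_three_pow_mul k
  have hm0 : 0 < m := Nat.pos_of_ne_zero (by rintro rfl; exact hm (dvd_zero 3))
  refine ⟨n + d, ?_, fun i hi => ?_⟩
  · calc 3 ^ (k - 1) ≤ 3 ^ k := Nat.pow_le_pow_right three_pos (Nat.sub_le k 1)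
      _ ≤ 1 + 3 ^ k * m := (Nat.le_mul_of_pos_right _ hm0).trans (Nat.le_add_left _ 1)
      _ = 2 ^ d := hd.symm
      _ ≤ 2 ^ (n + d) := Nat.pow_le_pow_right two_pos (Nat.le_add_left d n)
  · rw [two_pow_add_eq_add_mul_three_pow hd, Nat.add_mul_pow_div_pow_mod_of_lt three_pos _ _ hi]
    exact hn i hi

/-- For every digit `χ ∈ {0, 1, 2}` and every positive integer `k`, there exists a natural
number `n` such that `2 ^ n ≥ 3 ^ (k - 1)` (so that `2 ^ n` has at least `k` ternary digits)
and the digit `χ` occurs nowhere in the last `k` ternary digits of `2 ^ n`. -/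
theorem exists_two_pow_avoiding_digit_in_trailing (χ k : ℕ) (hχ : χ < 3) (hk : 0 < k) :
    ∃ n : ℕ, 3 ^ (k - 1) ≤ 2 ^ n ∧ ∀ i < k, 2 ^ n / 3 ^ i % 3 ≠ χ :=
  exists_two_pow_avoiding_digit_in_trailing_general χ k
end

section
/- For every positive integer k, the number of natural numbers n with n < 2·3^(k-1) such that the digit 2 occurs nowhere in the last k ternary digits of 2^n (i.e., (2^n / 3^i) % 3 ≠ 2 for all i < k) equals 2^(k-1). -/
lemma fourPow (j : ℕ) : ∃ b, b % 3 = 1 ∧ 4 ^ (3 ^ j) = 1 + 3 ^ (j + 1) * b := by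
  induction j with
  | zero => exact ⟨1, rfl, rfl⟩
  | succ j ih =>
    obtain ⟨b, hb, h⟩ := ih
    refine ⟨b + 3 * (3 ^ j * b ^ 2 + 3 ^ (2 * j) * b ^ 3), ?_, ?_⟩
    · omega
    · have h4 : 4 ^ (3 ^ (j + 1)) = (4 ^ (3 ^ j)) ^ 3 := by
        rw [← pow_mul, pow_succ]
      rw [h4, h]
      ring

lemma pow_eq_one_iff_modeq (m k : ℕ) :
    (2 : ZMod (3 ^ k)) ^ m = 1 ↔ 2 ^ m ≡ 1 [MOD 3 ^ k] := by
  rw [← ZMod.natCast_eq_natCast_iff]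
  push_cast
  rfl

lemma two_pow_odd_mod_three (m : ℕ) : 2 ^ (2 * m + 1) % 3 = 2 := by
  induction m with
  | zero => rfl
  | succ m ih =>
    have : 2 * (m + 1) + 1 = (2 * m + 1) + 2 := by ring
    rw [this, pow_add]
    omega

lemma two_pow_mul_eq_four_pow (m : ℕ) : (2 : ℕ) ^ (2 * m) = 4 ^ m := by
  rw [pow_mul]; norm_num

lemma orderOf_two (k : ℕ) (hk : 0 < k) :
    orderOf (2 : ZMod (3 ^ k)) = 2 * 3 ^ (k - 1) := by
  have h1 : (2 : ZMod (3 ^ k)) ^ (2 * 3 ^ (k - 1)) = 1 := by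
    rw [pow_eq_one_iff_modeq]
    obtain ⟨b, hb, h⟩ := fourPow (k - 1)
    rw [two_pow_mul_eq_four_pow, h]
    have hkk : k - 1 + 1 = k := by omega
    rw [hkk]
    exact (Nat.ModEq.symm ((Nat.modEq_iff_dvd' (by omega)).2 ⟨b, by omega⟩))
  have hdvd : orderOf (2 : ZMod (3 ^ k)) ∣ 2 * 3 ^ (k - 1) :=
    orderOf_dvd_of_pow_eq_one h1
  set d := orderOf (2 : ZMod (3 ^ k)) with hd
  have hodd : ¬ d ∣ 3 ^ (k - 1) := by
    intro hdv
    have h2 : (2 : ZMod (3 ^ k)) ^ (3 ^ (k - 1)) = 1 := orderOf_dvd_iff_pow_eq_one.1 hdv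
    rw [pow_eq_one_iff_modeq] at h2
    have h3 : 2 ^ (3 ^ (k - 1)) % 3 = 1 % 3 :=
      h2.of_dvd (dvd_pow_self 3 (by omega))
    obtain ⟨m, hm⟩ : Odd (3 ^ (k - 1)) := Odd.pow ⟨1, by norm_num⟩
    rw [hm, two_pow_odd_mod_three] at h3
    omega
  have hndvd : ¬ d ∣ 2 * 3 ^ (k - 2) ∨ k = 1 := by
    rcases Nat.eq_or_lt_of_le hk with h | hk2
    · right; omega
    left
    intro hdv
    have h2 : (2 : ZMod (3 ^ k)) ^ (2 * 3 ^ (k - 2)) = 1 := orderOf_dvd_iff_pow_eq_one.1 hdv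
    rw [pow_eq_one_iff_modeq, two_pow_mul_eq_four_pow] at h2
    obtain ⟨b, hb, h⟩ := fourPow (k - 2)
    rw [h] at h2
    have hkk : k - 2 + 1 = k - 1 := by omega
    rw [hkk] at h2
    have hdv3 : 3 ^ k ∣ 1 + 3 ^ (k - 1) * b - 1 := (Nat.modEq_iff_dvd' (by omega)).1 h2.symm
    have hdv4 : 3 ^ k ∣ 3 ^ (k - 1) * b := by simpa using hdv3
    have h5 : 3 ^ k = 3 ^ (k - 1) * 3 := by rw [← pow_succ]; congr 1; omega
    rw [h5] at hdv4
    have h6 : 3 ∣ b := (mul_dvd_mul_iff_left (by positivity : (3:ℕ) ^ (k-1) ≠ 0)).1 hdv4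
    omega
  -- factor d
  obtain ⟨d1, d2, hd1, hd2, hdeq⟩ := exists_dvd_and_dvd_of_dvd_mul hdvd
  obtain ⟨j, hj, hj2⟩ := (Nat.dvd_prime_pow Nat.prime_three).1 hd2
  rcases (Nat.dvd_prime Nat.prime_two).1 hd1 with rfl | rfl
  · exfalso; exact hodd (hdeq ▸ (by simpa using hj2 ▸ hd2))
  · rcases Nat.eq_or_lt_of_le hj with h | hjlt
    · rw [hdeq, hj2, h]
    · exfalso
      rcases hndvd with hn | hk1
      · exact hn (by rw [hdeq, hj2]; exact Nat.mul_dvd_mul_left 2 (pow_dvd_pow 3 (by omega)))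
      · subst hk1
        simp at hj
        subst hj
        simp at hjlt

lemma exists_pow_mod (k : ℕ) (hk : 0 < k) (u : ℕ) (hu : Nat.Coprime u (3 ^ k)) :
    ∃ n < 2 * 3 ^ (k - 1), 2 ^ n % 3 ^ k = u % 3 ^ k := by
  haveI : NeZero (3 ^ k) := ⟨by positivity⟩
  have hc2 : Nat.Coprime 2 (3 ^ k) := by
    apply Nat.Coprime.pow_right
    decide
  set u2 : (ZMod (3 ^ k))ˣ := ZMod.unitOfCoprime 2 hc2 with hu2
  have hord : orderOf u2 = 2 * 3 ^ (k - 1) := by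
    rw [← orderOf_units]
    have : ((u2 : ZMod (3 ^ k))) = 2 := by
      rw [hu2, ZMod.coe_unitOfCoprime]; push_cast; ring
    rw [this]
    exact orderOf_two k hk
  have hcard : Nat.card (ZMod (3 ^ k))ˣ = 2 * 3 ^ (k - 1) := by
    rw [Nat.card_eq_fintype_card, ZMod.card_units_eq_totient,
      Nat.totient_prime_pow Nat.prime_three hk]
    ring
  have htop : Subgroup.zpowers u2 = ⊤ := by
    apply Subgroup.eq_top_of_card_eq
    rw [Nat.card_zpowers, hord, hcard]
  set v : (ZMod (3 ^ k))ˣ := ZMod.unitOfCoprime u hu with hv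
  have hvmem : v ∈ Subgroup.zpowers u2 := htop ▸ Subgroup.mem_top v
  obtain ⟨n, hn⟩ := mem_powers_iff_mem_zpowers.2 hvmem
  refine ⟨n % (2 * 3 ^ (k - 1)), Nat.mod_lt _ (by positivity), ?_⟩
  have h2 : u2 ^ (n % (2 * 3 ^ (k - 1))) = v := by
    rw [← hord, pow_mod_orderOf]; exact hn
  have h3 : ((u2 ^ (n % (2 * 3 ^ (k - 1))) : (ZMod (3 ^ k))ˣ) : ZMod (3 ^ k))
      = ((u : ℕ) : ZMod (3 ^ k)) := by
    rw [h2, hv, ZMod.coe_unitOfCoprime]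
  rw [Units.val_pow_eq_pow_val, ZMod.coe_unitOfCoprime] at h3
  have h4 : (((2 : ℕ) ^ (n % (2 * 3 ^ (k - 1))) : ℕ) : ZMod (3 ^ k)) = ((u : ℕ) : ZMod (3 ^ k)) := by
    push_cast
    exact h3
  exact ZMod.natCast_eq_natCast_iff' _ _ _ |>.1 h4

lemma inj_pow_mod (k : ℕ) (hk : 0 < k) {a b : ℕ} (ha : a < 2 * 3 ^ (k - 1))
    (hb : b < 2 * 3 ^ (k - 1)) (h : 2 ^ a % 3 ^ k = 2 ^ b % 3 ^ k) : a = b := by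
  wlog hab : a ≤ b generalizing a b
  · exact (this hb ha h.symm (by omega)).symm
  have hle : (2 : ℕ) ^ a ≤ 2 ^ b := Nat.pow_le_pow_right (by norm_num) hab
  have hdvd : 3 ^ k ∣ 2 ^ b - 2 ^ a := (Nat.modEq_iff_dvd' hle).1 h
  have hsplit : 2 ^ b - 2 ^ a = 2 ^ a * (2 ^ (b - a) - 1) := by
    rw [Nat.mul_sub, mul_one, ← pow_add]
    congr 2
    omega
  rw [hsplit] at hdvd
  have hc : Nat.Coprime (3 ^ k) (2 ^ a) := Nat.Coprime.pow _ _ (by decide)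
  have hdvd2 : 3 ^ k ∣ 2 ^ (b - a) - 1 := hc.dvd_of_dvd_mul_left hdvd
  have hmod : 2 ^ (b - a) ≡ 1 [MOD 3 ^ k] := by
    have h1 : (1 : ℕ) ≤ 2 ^ (b - a) := Nat.one_le_two_pow
    exact ((Nat.modEq_iff_dvd' h1).2 hdvd2).symm
  have hordd : orderOf (2 : ZMod (3 ^ k)) ∣ b - a :=
    orderOf_dvd_of_pow_eq_one ((pow_eq_one_iff_modeq _ k).2 hmod)
  rw [orderOf_two k hk] at hordd
  rcases Nat.eq_zero_or_pos (b - a) with h0 | hpos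
  · omega
  · have := Nat.le_of_dvd hpos hordd
    omega

lemma digit_mod {k i : ℕ} (a : ℕ) (hik : i < k) :
    a % 3 ^ k / 3 ^ i % 3 = a / 3 ^ i % 3 := by
  have h1 : 3 ^ k = 3 ^ i * 3 ^ (k - i) := by rw [← pow_add]; congr 1; omega
  rw [h1, Nat.mod_mul_right_div_self]
  exact Nat.mod_mod_of_dvd _ (dvd_pow_self 3 (by omega))

def tg : ℕ → ℕ
  | 0 => 0
  | (m + 1) => (m + 1) % 2 + 3 * tg ((m + 1) / 2)
decreasing_by omega

lemma tg_eq (m : ℕ) : tg m = m % 2 + 3 * tg (m / 2) := by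
  cases m with
  | zero => simp [tg]
  | succ m => rw [tg]

lemma tg_lt : ∀ (j : ℕ), ∀ m < 2 ^ j, tg m < 3 ^ j := by
  intro j
  induction j with
  | zero =>
    intro m hm
    interval_cases m
    simp [tg]
  | succ j ih =>
    intro m hm
    have h1 : m / 2 < 2 ^ j := by omega
    have h2 := ih _ h1
    have h3 := tg_eq m
    have h4 : (3 : ℕ) ^ (j + 1) = 3 * 3 ^ j := by rw [pow_succ]; ring
    omega

lemma tg_digit : ∀ (i m : ℕ), tg m / 3 ^ i % 3 = m / 2 ^ i % 2 := by
  intro i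
  induction i with
  | zero =>
    intro m
    have h := tg_eq m
    simp only [pow_zero, Nat.div_one]
    omega
  | succ i ih =>
    intro m
    have h := tg_eq m
    have h1 : tg m / 3 ^ (i + 1) = tg (m / 2) / 3 ^ i := by
      rw [pow_succ']
      rw [← Nat.div_div_eq_div_mul]
      congr 1
      omega
    have h2 : m / 2 ^ (i + 1) = m / 2 / 2 ^ i := by
      rw [pow_succ', ← Nat.div_div_eq_div_mul]
    rw [h1, h2, ih]

lemma tg_eq_zero : ∀ m, tg m = 0 → m = 0 := by
  intro m
  induction m using Nat.strong_induction_on with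
  | _ m ih =>
    intro h
    have h1 := tg_eq m
    rcases Nat.eq_zero_or_pos m with rfl | hm
    · rfl
    · have h2 : m / 2 < m := by omega
      have h3 : m / 2 = 0 := ih _ h2 (by omega)
      omega

lemma tg_inj : ∀ a b, tg a = tg b → a = b := by
  intro a
  induction a using Nat.strong_induction_on with
  | _ a ih =>
    intro b h
    rcases Nat.eq_zero_or_pos a with rfl | ha
    · exact (tg_eq_zero b (by simpa [tg] using h.symm)).symm
    · have h1 := tg_eq a
      have h2 := tg_eq b
      have h3 : a % 2 = b % 2 ∧ tg (a / 2) = tg (b / 2) := by omega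
      have h4 : a / 2 = b / 2 := ih _ (by omega) _ h3.2
      omega

lemma tg_surj : ∀ (j : ℕ), ∀ w < 3 ^ j, (∀ i, w / 3 ^ i % 3 ≠ 2) → ∃ m < 2 ^ j, tg m = w := by
  intro j
  induction j with
  | zero =>
    intro w hw _
    exact ⟨0, by norm_num, by interval_cases w; simp [tg]⟩
  | succ j ih =>
    intro w hw hdig
    have hd : w % 3 ≠ 2 := by simpa using hdig 0
    have h3 : (3 : ℕ) ^ (j + 1) = 3 * 3 ^ j := by rw [pow_succ]; ring
    have hw3 : w / 3 < 3 ^ j := by omega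
    have hdig3 : ∀ i, w / 3 / 3 ^ i % 3 ≠ 2 := by
      intro i
      have h1 : w / 3 / 3 ^ i = w / 3 ^ (i + 1) := by
        rw [Nat.div_div_eq_div_mul, pow_succ']
      rw [h1]
      exact hdig (i + 1)
    obtain ⟨m', hm', hm'eq⟩ := ih _ hw3 hdig3
    refine ⟨w % 3 + 2 * m', by omega, ?_⟩
    have h1 := tg_eq (w % 3 + 2 * m')
    have h2 : (w % 3 + 2 * m') % 2 = w % 3 := by omega
    have h3' : (w % 3 + 2 * m') / 2 = m' := by omega
    rw [h1, h2, h3', hm'eq]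
    omega

lemma card_T (k : ℕ) (hk : 0 < k) :
    ((Finset.range (3 ^ k)).filter
      (fun u => u % 3 = 1 ∧ ∀ i < k, u / 3 ^ i % 3 ≠ 2)).card = 2 ^ (k - 1) := by
  have hpow : (3 : ℕ) ^ k = 3 * 3 ^ (k - 1) := by
    rw [← pow_succ']; congr 1; omega
  have himg : ((Finset.range (3 ^ k)).filter
      (fun u => u % 3 = 1 ∧ ∀ i < k, u / 3 ^ i % 3 ≠ 2))
      = (Finset.range (2 ^ (k - 1))).image (fun m => 1 + 3 * tg m) := by
    ext u
    simp only [Finset.mem_filter, Finset.mem_range, Finset.mem_image]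
    constructor
    · rintro ⟨hu, hu3, hdig⟩
      have hw : u / 3 < 3 ^ (k - 1) := by omega
      have hdigw : ∀ i, u / 3 / 3 ^ i % 3 ≠ 2 := by
        intro i
        have h1 : u / 3 / 3 ^ i = u / 3 ^ (i + 1) := by
          rw [Nat.div_div_eq_div_mul, pow_succ']
        rw [h1]
        by_cases hik : i + 1 < k
        · exact hdig _ hik
        · have : u / 3 ^ (i + 1) = 0 := by
            apply Nat.div_eq_of_lt
            calc u < 3 ^ k := hu
            _ ≤ 3 ^ (i + 1) := Nat.pow_le_pow_right (by norm_num) (by omega)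
          rw [this]; norm_num
      obtain ⟨m, hm, hmeq⟩ := tg_surj (k - 1) _ hw hdigw
      exact ⟨m, hm, by omega⟩
    · rintro ⟨m, hm, rfl⟩
      have hlt := tg_lt (k - 1) m hm
      refine ⟨by omega, by omega, ?_⟩
      intro i hik
      cases i with
      | zero => simp only [pow_zero, Nat.div_one]; omega
      | succ i =>
        have h1 : (1 + 3 * tg m) / 3 ^ (i + 1) = tg m / 3 ^ i := by
          rw [pow_succ', ← Nat.div_div_eq_div_mul]
          congr 1
          omega
        rw [h1, tg_digit]
        omega
  rw [himg, Finset.card_image_of_injOn, Finset.card_range]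
  intro a _ b _ h
  simp only at h
  exact tg_inj a b (by omega)

/-- For every positive integer `k`, the number of naturals `n < 2 * 3 ^ (k - 1)` such that
the digit `2` occurs nowhere in the last `k` ternary digits of `2 ^ n` equals `2 ^ (k - 1)`. -/
theorem card_two_pow_trailing_no_two (k : ℕ) (hk : 0 < k) :
    ((Finset.range (2 * 3 ^ (k - 1))).filter
      (fun n => ∀ i < k, 2 ^ n / 3 ^ i % 3 ≠ 2)).card = 2 ^ (k - 1) := by
  have h3pos : 0 < 3 ^ k := by positivity
  have key : ((Finset.range (2 * 3 ^ (k - 1))).filter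
      (fun n => ∀ i < k, 2 ^ n / 3 ^ i % 3 ≠ 2)).image (fun n => 2 ^ n % 3 ^ k)
      = (Finset.range (3 ^ k)).filter
        (fun u => u % 3 = 1 ∧ ∀ i < k, u / 3 ^ i % 3 ≠ 2) := by
    ext u
    simp only [Finset.mem_image, Finset.mem_filter, Finset.mem_range]
    constructor
    · rintro ⟨n, ⟨hn, hP⟩, rfl⟩
      refine ⟨Nat.mod_lt _ h3pos, ?_, ?_⟩
      · have h1 : 2 ^ n % 3 ^ k % 3 = 2 ^ n % 3 := by
          have := digit_mod (k := k) (i := 0) (2 ^ n) hk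
          simpa using this
        have h2 : 2 ^ n % 3 ≠ 0 := by
          intro h0
          have := Nat.Prime.dvd_of_dvd_pow Nat.prime_three (Nat.dvd_of_mod_eq_zero h0)
          norm_num at this
        have h3 : 2 ^ n % 3 ≠ 2 := by
          have := hP 0 hk
          simpa using this
        omega
      · intro i hik
        rw [digit_mod _ hik]
        exact hP i hik
    · rintro ⟨hu, hu3, hdig⟩
      have hcop : Nat.Coprime u (3 ^ k) := by
        apply Nat.Coprime.pow_right
        rw [Nat.coprime_comm]
        rw [Nat.Prime.coprime_iff_not_dvd Nat.prime_three]
        omega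
      obtain ⟨n, hn, hneq⟩ := exists_pow_mod k hk u hcop
      rw [Nat.mod_eq_of_lt hu] at hneq
      refine ⟨n, ⟨hn, ?_⟩, hneq⟩
      intro i hik
      rw [← digit_mod _ hik, hneq]
      exact hdig i hik
  have hinj : Set.InjOn (fun n => 2 ^ n % 3 ^ k)
      ((Finset.range (2 * 3 ^ (k - 1))).filter
        (fun n => ∀ i < k, 2 ^ n / 3 ^ i % 3 ≠ 2) : Finset ℕ) := by
    intro a ha b hb h
    simp only [Finset.coe_filter, Set.mem_setOf_eq, Finset.mem_range] at ha hb
    exact inj_pow_mod k hk ha.1 hb.1 h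
  rw [← Finset.card_image_of_injOn hinj, key, card_T k hk]
end

section
/- For every positive integer k, the number of natural numbers n with n < 2·3^(k-1) such that the digit 0 occurs nowhere in the last k ternary digits of 2^n (i.e., (2^n / 3^i) % 3 ≠ 0 for all i < k) equals 2^k. -/
/-!
Modulo `3 ^ k` we have `2 = -(1 + 3 * (-1))`, where `-1` has order `2` and `1 + 3 * (-1)` has
order `3 ^ (k - 1)`; so `2` has order `2 * 3 ^ (k - 1) = φ (3 ^ k)`, i.e. it is a primitive root,
and `n ↦ 2 ^ n % 3 ^ k` maps `[0, 2 * 3 ^ (k - 1))` bijectively onto the residues prime to `3`.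
The last `k` ternary digits of `2 ^ n` are those of `2 ^ n % 3 ^ k`, and a residue whose `k`
digits are all nonzero is automatically prime to `3`; there are `2 ^ k` such residues.
-/

open Finset
open scoped Nat

theorem Nat.mod_pow_div_pow_mod_of_lt (a b : ℕ) {i k : ℕ} (h : i < k) :
    a % b ^ k / b ^ i % b = a / b ^ i % b := by
  rw [← Nat.mod_mul_right_div_self, ← Nat.mod_mul_right_div_self, ← pow_succ,
    Nat.mod_mod_of_dvd _ (pow_dvd_pow b h)]

theorem Nat.mem_filter_digits_ne_zero_succ_iff {b k r : ℕ} (hb : 0 < b) :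
    r ∈ {r ∈ range (b ^ (k + 1)) | ∀ i < k + 1, r / b ^ i % b ≠ 0} ↔
      r / b ∈ {q ∈ range (b ^ k) | ∀ i < k, q / b ^ i % b ≠ 0} ∧ r % b ∈ Ico 1 b := by
  simp only [mem_filter, mem_range, mem_Ico, Nat.forall_lt_succ_left, pow_zero, Nat.div_one,
    Nat.div_lt_iff_lt_mul hb, ← pow_succ, Nat.div_div_eq_div_mul, ← pow_succ',
    Nat.one_le_iff_ne_zero, Nat.mod_lt r hb, and_true]
  tauto

theorem Nat.card_filter_digits_ne_zero {b : ℕ} (hb : 0 < b) (k : ℕ) :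
    #{r ∈ range (b ^ k) | ∀ i < k, r / b ^ i % b ≠ 0} = (b - 1) ^ k := by
  induction k with
  | zero => simp
  | succ k ih =>
    rw [pow_succ (b - 1), ← ih, ← Nat.card_Ico 1 b, ← card_product]
    refine card_nbij' (fun r => (r / b, r % b)) (fun p => b * p.1 + p.2) ?_ ?_ ?_ ?_
    · intro r hr
      exact mem_product.2 ((mem_filter_digits_ne_zero_succ_iff hb).1 hr)
    · rintro ⟨q, d⟩ hqd
      obtain ⟨hq, hd⟩ := mem_product.1 hqd
      have hd' : d < b := (mem_Ico.1 hd).2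
      refine (mem_filter_digits_ne_zero_succ_iff hb).2 ?_
      simpa only [Nat.mul_add_div hb, Nat.div_eq_of_lt hd', add_zero, Nat.mul_add_mod,
        Nat.mod_eq_of_lt hd'] using And.intro hq hd
    · intro r _
      exact Nat.div_add_mod r b
    · rintro ⟨q, d⟩ hqd
      have hd' : d < b := (mem_Ico.1 (mem_product.1 hqd).2).2
      simp [Nat.mul_add_div hb, Nat.div_eq_of_lt hd', Nat.mod_eq_of_lt hd']

theorem ZMod.orderOf_prime_sub_one {p : ℕ} (hp : p.Prime) (hp2 : p ≠ 2) (n : ℕ) :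
    orderOf ((p : ZMod (p ^ (n + 1))) - 1) = 2 * p ^ n := by
  have hp3 : 3 ≤ p := by have := hp.two_le; omega
  have hne : p ^ (n + 1) ≠ 2 := by
    have : p ≤ p ^ (n + 1) := Nat.le_self_pow (by omega) p
    omega
  have : Fact (1 < p ^ (n + 1)) := ⟨Nat.one_lt_pow n.succ_ne_zero (by omega)⟩
  have hneg : (p : ZMod (p ^ (n + 1))) - 1 = -1 * (1 + p * ((-1 : ℤ) : ZMod (p ^ (n + 1)))) := by
    push_cast; ring
  have hndvd : ¬ (p : ℤ) ∣ -1 := by rw [dvd_neg]; exact_mod_cast hp.not_dvd_one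
  have hord₁ : orderOf (-1 : ZMod (p ^ (n + 1))) = 2 := by
    rw [orderOf_neg_one, ZMod.ringChar_zmod_n, if_neg hne]
  have hord₂ := ZMod.orderOf_one_add_mul_prime hp hp2 _ hndvd n
  rw [hneg, (Commute.all _ _).orderOf_mul_eq_mul_orderOf_of_coprime (by
      rw [hord₁, hord₂]
      exact Nat.Coprime.pow_right n ((Nat.coprime_primes Nat.prime_two hp).2 hp2.symm)),
    hord₁, hord₂]

theorem Nat.injOn_pow_mod (a M : ℕ) :
    Set.InjOn (fun n => a ^ n % M) (Set.Iio (orderOf (a : ZMod M))) := by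
  intro x hx y hy h
  refine pow_injOn_Iio_orderOf hx hy ?_
  simpa [← ZMod.natCast_eq_natCast_iff'] using h

theorem Nat.image_pow_mod_eq_filter_coprime {a M : ℕ} (ha : M.Coprime a)
    (hord : orderOf (a : ZMod M) = φ M) :
    (range (φ M)).image (fun n => a ^ n % M) = {r ∈ range M | M.Coprime r} := by
  refine eq_of_subset_of_card_le ?_ ?_
  · simp only [subset_iff, mem_image, mem_range, mem_filter]
    rintro _ ⟨n, hn, rfl⟩
    refine ⟨Nat.mod_lt _ (Nat.totient_pos.1 (by omega)), ?_⟩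
    rw [Nat.Coprime, Nat.gcd_comm, ← Nat.gcd_rec]
    exact ha.pow_right n
  · rw [← Nat.totient_eq_card_coprime, Finset.card_image_of_injOn, card_range]
    rw [← hord, coe_range]
    exact Nat.injOn_pow_mod a M

/-- For every positive integer `k`, the number of naturals `n < 2 * 3 ^ (k - 1)` such that
the digit `0` occurs nowhere in the last `k` ternary digits of `2 ^ n` equals `2 ^ k`. -/
theorem card_two_pow_trailing_no_zero (k : ℕ) (hk : 0 < k) :
    ((Finset.range (2 * 3 ^ (k - 1))).filter
      (fun n => ∀ i < k, 2 ^ n / 3 ^ i % 3 ≠ 0)).card = 2 ^ k := by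
  obtain ⟨K, rfl⟩ := Nat.exists_eq_add_one_of_ne_zero hk.ne'
  set M := 3 ^ (K + 1)
  have hφ : φ M = 2 * 3 ^ K := by
    rw [Nat.totient_prime_pow_succ Nat.prime_three, mul_comm]
  have hcop : M.Coprime 2 := Nat.Coprime.pow_left _ (by norm_num)
  have hord : orderOf ((2 : ℕ) : ZMod M) = φ M := by
    rw [hφ, show ((2 : ℕ) : ZMod M) = (3 : ℕ) - 1 by push_cast; ring,
      ZMod.orderOf_prime_sub_one Nat.prime_three (by norm_num)]
  have digits_coprime : ∀ r, (∀ i < K + 1, r / 3 ^ i % 3 ≠ 0) → M.Coprime r := fun r hr =>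
    Nat.Coprime.pow_left _ ((Nat.Prime.coprime_iff_not_dvd Nat.prime_three).2
      fun h => hr 0 K.succ_pos (by simpa using Nat.mod_eq_zero_of_dvd h))
  calc #{n ∈ range (2 * 3 ^ (K + 1 - 1)) | ∀ i < K + 1, 2 ^ n / 3 ^ i % 3 ≠ 0}
      = #{n ∈ range (φ M) | ∀ i < K + 1, 2 ^ n % M / 3 ^ i % 3 ≠ 0} := by
        rw [hφ, Nat.add_sub_cancel]
        congr! 4 with n - i hi
        rw [Nat.mod_pow_div_pow_mod_of_lt _ _ hi]
    _ = #(image (fun n => 2 ^ n % M)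
          {n ∈ range (φ M) | ∀ i < K + 1, 2 ^ n % M / 3 ^ i % 3 ≠ 0}) :=
        (card_image_of_injOn ((Nat.injOn_pow_mod 2 M).mono fun n hn => by
          rw [Set.mem_Iio, hord]; exact mem_range.1 (mem_filter.1 hn).1)).symm
    _ = #{r ∈ (range (φ M)).image (fun n => 2 ^ n % M) |
          ∀ i < K + 1, r / 3 ^ i % 3 ≠ 0} := by
        rw [filter_image]
    _ = #{r ∈ range M | M.Coprime r ∧ ∀ i < K + 1, r / 3 ^ i % 3 ≠ 0} := by
        rw [Nat.image_pow_mod_eq_filter_coprime hcop hord, filter_filter]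
    _ = 2 ^ (K + 1) := by
        rw [filter_congr fun r _ => and_iff_right_of_imp (digits_coprime r),
          Nat.card_filter_digits_ne_zero (by norm_num)]
end

section
/- For every positive integer k, the number of natural numbers n with n < 2·3^(k-1) such that the digit 1 occurs nowhere in the last k ternary digits of 2^n (i.e., (2^n / 3^i) % 3 ≠ 1 for all i < k) equals 2^(k-1). -/
/-!
Modulo `3 ^ k` we have `2 = -1 * (1 - 3)`, where `-1` has order `2` and `1 - 3` has order
`3 ^ (k - 1)`; these orders are coprime, so `2` has order `2 * 3 ^ (k - 1) = φ (3 ^ k)`,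
i.e. it is a primitive root. Hence `n ↦ 2 ^ n % 3 ^ k` maps `[0, 2 * 3 ^ (k - 1))` bijectively
onto the residues prime to `3`, and the last `k` ternary digits of `2 ^ n` are those of this
residue. A residue prime to `3` avoiding the digit `1` ends in `2`, and its other `k - 1` digits
range freely over `{0, 2}`.
-/

open Finset
open scoped Nat

def DigitsAvoid (b d k m : ℕ) : Prop := ∀ i < k, m / b ^ i % b ≠ d

instance (b d k : ℕ) : DecidablePred (DigitsAvoid b d k) := fun _ => by
  unfold DigitsAvoid; infer_instance

theorem digitsAvoid_succ {b d k m : ℕ} :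
    DigitsAvoid b d (k + 1) m ↔ m % b ≠ d ∧ DigitsAvoid b d k (m / b) := by
  simp only [DigitsAvoid, Nat.forall_lt_succ_left, pow_zero, Nat.div_one, pow_succ',
    Nat.div_div_eq_div_mul]

theorem digitsAvoid_mod_pow {b d k m : ℕ} :
    DigitsAvoid b d k (m % b ^ k) ↔ DigitsAvoid b d k m := by
  refine forall₂_congr fun i hi => ?_
  rw [← Nat.pow_sub_mul_pow b hi.le, mul_comm, Nat.mod_mul_right_div_self,
    Nat.mod_mod_of_dvd _ (dvd_pow_self b (Nat.sub_ne_zero_of_lt hi))]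

theorem card_filter_range_mul (b N : ℕ) (p q : ℕ → Prop) [DecidablePred p] [DecidablePred q] :
    ((range (N * b)).filter fun m => p (m % b) ∧ q (m / b)).card =
      ((range N).filter q).card * ((range b).filter p).card := by
  have div_mod_mul_add {x y : ℕ} (hy : y < b) : (x * b + y) / b = x ∧ (x * b + y) % b = y := by
    rw [add_comm, Nat.add_mul_div_right _ _ (Nat.zero_lt_of_lt hy), Nat.div_eq_of_lt hy,
      Nat.add_mul_mod_self_right, Nat.mod_eq_of_lt hy, zero_add]
    exact ⟨rfl, rfl⟩
  rw [← card_product]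
  refine card_nbij' (fun m => (m / b, m % b)) (fun x => x.1 * b + x.2) ?_ ?_ ?_ ?_
  · intro m hm
    simp only [coe_filter, mem_range, coe_product, Set.mem_prod] at hm ⊢
    have hb : 0 < b := Nat.pos_of_mul_pos_left (Nat.zero_lt_of_lt hm.1)
    exact ⟨⟨(Nat.div_lt_iff_lt_mul hb).2 hm.1, hm.2.2⟩, Nat.mod_lt m hb, hm.2.1⟩
  · rintro ⟨x, y⟩ hxy
    simp only [coe_filter, mem_range, coe_product, Set.mem_prod] at hxy ⊢
    obtain ⟨⟨hx, hq⟩, hy, hp⟩ := hxy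
    obtain ⟨hdiv, hmod⟩ := div_mod_mul_add (x := x) hy
    refine ⟨?_, by rwa [hmod], by rwa [hdiv]⟩
    calc x * b + y < x * b + b := by omega
      _ = (x + 1) * b := by ring
      _ ≤ N * b := Nat.mul_le_mul_right b hx
  · intro m _
    exact Nat.div_add_mod' m b
  · rintro ⟨x, y⟩ hxy
    simp only [coe_filter, mem_range, coe_product, Set.mem_prod] at hxy
    obtain ⟨-, hy, -⟩ := hxy
    obtain ⟨hdiv, hmod⟩ := div_mod_mul_add (x := x) hy
    exact Prod.ext hdiv hmod

theorem card_digitsAvoid (b d k : ℕ) (hd : d < b) :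
    ((range (b ^ k)).filter (DigitsAvoid b d k)).card = (b - 1) ^ k := by
  induction k with
  | zero => rw [pow_zero, filter_true_of_mem fun m _ i hi => absurd hi (Nat.not_lt_zero i)]; rfl
  | succ k ih =>
    have hsplit : (range (b ^ (k + 1))).filter (DigitsAvoid b d (k + 1)) =
        (range (b ^ k * b)).filter fun m => m % b ≠ d ∧ DigitsAvoid b d k (m / b) := by
      simp only [pow_succ, digitsAvoid_succ]
    rw [hsplit, card_filter_range_mul b (b ^ k) (· ≠ d) (DigitsAvoid b d k), ih, filter_ne',
      card_erase_of_mem (mem_range.2 hd), card_range, pow_succ]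

theorem card_filter_coprime_digitsAvoid_one (j : ℕ) :
    ((range (3 ^ (j + 1))).filter fun m =>
      (3 ^ (j + 1)).Coprime m ∧ DigitsAvoid 3 1 (j + 1) m).card = 2 ^ j := by
  have hsplit : ((range (3 ^ (j + 1))).filter fun m =>
      (3 ^ (j + 1)).Coprime m ∧ DigitsAvoid 3 1 (j + 1) m) =
        (range (3 ^ j * 3)).filter fun m => m % 3 = 2 ∧ DigitsAvoid 3 1 j (m / 3) := by
    rw [← pow_succ]
    refine filter_congr fun m _ => ?_
    rw [Nat.coprime_pow_left_iff j.succ_pos, Nat.Prime.coprime_iff_not_dvd Nat.prime_three,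
      digitsAvoid_succ, Nat.dvd_iff_mod_eq_zero, ← and_assoc]
    exact and_congr_left' (by omega)
  rw [hsplit, card_filter_range_mul 3 (3 ^ j) (· = 2) (DigitsAvoid 3 1 j),
    card_digitsAvoid 3 1 j (by norm_num)]
  simp [filter_eq']

theorem card_filter_pow_mod_eq_card_filter_coprime {N a : ℕ} (ha : orderOf (a : ZMod N) = φ N)
    (P : ℕ → Prop) [DecidablePred P] :
    ((range (φ N)).filter fun n => P (a ^ n % N)).card =
      ((range N).filter fun m => N.Coprime m ∧ P m).card := by
  rcases N.eq_zero_or_pos with rfl | hN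
  · simp
  have hinj : Set.InjOn (fun n => a ^ n % N) (range (φ N)) := by
    intro m hm n hn h
    refine pow_injOn_Iio_orderOf (x := (a : ZMod N)) (by simpa [ha] using hm)
      (by simpa [ha] using hn) ?_
    simpa [← ZMod.natCast_eq_natCast_iff'] using h
  have hcop : a.Coprime N := (ZMod.isUnit_iff_coprime a N).1
    (orderOf_pos_iff.1 (ha ▸ Nat.totient_pos.2 hN) |>.isUnit)
  have himage : (range (φ N)).image (fun n => a ^ n % N) = (range N).filter N.Coprime := by
    refine eq_of_subset_of_card_le ?_ ?_
    · intro m hm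
      obtain ⟨n, -, rfl⟩ := mem_image.1 hm
      refine mem_filter.2 ⟨mem_range.2 (Nat.mod_lt _ hN), Nat.Coprime.symm ?_⟩
      rw [Nat.Coprime, ← Nat.gcd_rec]
      exact (hcop.pow_left n).symm
    · rw [card_image_of_injOn hinj, card_range, Nat.totient_eq_card_coprime]
  rw [← card_image_of_injOn (hinj.mono (filter_subset _ _)), ← filter_image, himage,
    filter_filter]

theorem orderOf_two_zmod_three_pow (j : ℕ) : orderOf (2 : ZMod (3 ^ (j + 1))) = 2 * 3 ^ j := by
  have : Fact (1 < 3 ^ (j + 1)) := ⟨Nat.one_lt_pow j.succ_ne_zero (by norm_num)⟩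
  have hneg : orderOf (-1 : ZMod (3 ^ (j + 1))) = 2 := by
    rw [orderOf_neg_one, ZMod.ringChar_zmod_n, if_neg]
    exact fun h => absurd (h ▸ dvd_pow_self 3 j.succ_ne_zero) (by norm_num)
  have hthree : orderOf (1 + (3 : ℕ) * ((-1 : ℤ) : ZMod (3 ^ (j + 1)))) = 3 ^ j :=
    ZMod.orderOf_one_add_mul_prime Nat.prime_three (by norm_num) (-1) (by norm_num) j
  have hcop : (orderOf (-1 : ZMod (3 ^ (j + 1)))).Coprime
      (orderOf (1 + (3 : ℕ) * ((-1 : ℤ) : ZMod (3 ^ (j + 1))))) := by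
    rw [hneg, hthree]
    exact Nat.Coprime.pow_right _ (by norm_num)
  rw [show (2 : ZMod (3 ^ (j + 1))) = -1 * (1 + (3 : ℕ) * ((-1 : ℤ) : ZMod (3 ^ (j + 1)))) by
    push_cast; ring, (Commute.all _ _).orderOf_mul_eq_mul_orderOf_of_coprime hcop, hneg, hthree]

/-- For every positive integer `k`, the number of naturals `n < 2 * 3 ^ (k - 1)` such that
the digit `1` occurs nowhere in the last `k` ternary digits of `2 ^ n` equals `2 ^ (k - 1)`. -/
theorem card_two_pow_trailing_no_one (k : ℕ) (hk : 0 < k) :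
    ((Finset.range (2 * 3 ^ (k - 1))).filter
      (fun n => ∀ i < k, 2 ^ n / 3 ^ i % 3 ≠ 1)).card = 2 ^ (k - 1) := by
  obtain ⟨j, rfl⟩ : ∃ j, k = j + 1 := ⟨k - 1, by omega⟩
  have htotient : φ (3 ^ (j + 1)) = 2 * 3 ^ j := by
    rw [Nat.totient_prime_pow_succ Nat.prime_three, mul_comm]
  have horder : orderOf ((2 : ℕ) : ZMod (3 ^ (j + 1))) = φ (3 ^ (j + 1)) := by
    rw [htotient, Nat.cast_ofNat, orderOf_two_zmod_three_pow]
  calc _ = ((range (φ (3 ^ (j + 1)))).filter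
          fun n => DigitsAvoid 3 1 (j + 1) (2 ^ n % 3 ^ (j + 1))).card := by
        simp only [htotient, digitsAvoid_mod_pow, Nat.add_sub_cancel]
        rfl
    _ = 2 ^ j := by
        rw [card_filter_pow_mod_eq_card_filter_coprime horder, card_filter_coprime_digitsAvoid_one]
end

section
/- Fix χ ∈ Fin 3 and a natural number k. Let μ be the infinite product probability measure on ℕ → Fin 3 whose factors are each the uniform probability measure on Fin 3 (i.e., the rolls of a fair three-sided die, independently and identically distributed). For ω : ℕ → Fin 3, define T(ω) to be the least natural number m such that m ≥ k and ω(m − 1 − i) ≠ χ for all i < k (the number of rolls needed until an uninterrupted run of k consecutive outcomes all different from χ), with T(ω) = +∞ if no such m exists. Then the expected value of T with respect to μ equals 3·(3/2)^k − 3. -/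
/-!
After `m` rolls let `R m` be the length of the current run of outcomes different from `χ`;
`T` is the time at which this Markov chain first reaches `k`, so `∫ T = ∑ₙ μ (T > n)`, and
`μ (T > n) = ∑_{r < k} pₙ r` where `pₙ r` is the probability that `R` stayed below `k` up to
time `n` and `R n = r`. Independence of the rolls gives the one-step recursion of `pₙ`.
The expected remaining time from run length `r`, `v r = 3 (3/2)^k - 3 (3/2)^r`, is a Lyapunov
function: `∑_r pₙ r * v r` drops at each step by exactly `∑_r pₙ r`, and telescoping yields
`∑ₙ μ (T > n) = v 0`.
-/

open MeasureTheory ProbabilityTheory ENNReal Finset Filter Topology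

open scoped Classical in
theorem iInf_natCast_eq_tsum (S : Set ℕ) :
    ⨅ m ∈ S, (m : ℝ≥0∞) = ∑' n : ℕ, if ∀ m ∈ S, n < m then 1 else 0 := by
  rcases S.eq_empty_or_nonempty with rfl | hS
  · simp
  · have hmin : ⨅ m ∈ S, (m : ℝ≥0∞) = (sInf S : ℕ) :=
      le_antisymm (iInf₂_le _ (Nat.sInf_mem hS))
        (le_iInf₂ fun m hm ↦ by gcongr; exact Nat.sInf_le hm)
    have hlt (n : ℕ) : (∀ m ∈ S, n < m) ↔ n < sInf S :=
      ⟨fun h ↦ h _ (Nat.sInf_mem hS), fun h m hm ↦ h.trans_le (Nat.sInf_le hm)⟩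
    simp_rw [hmin, hlt]
    rw [tsum_eq_sum (s := range (sInf S)) (by simp +contextual)]
    simp +contextual [filter_true_of_mem]

theorem lintegral_iInf_natCast_eq_tsum {Ω : Type*} [MeasurableSpace Ω] (μ : Measure Ω)
    (S : Ω → Set ℕ) (hS : ∀ n, MeasurableSet {ω | ∀ m ∈ S ω, n < m}) :
    ∫⁻ ω, ⨅ m ∈ S ω, (m : ℝ≥0∞) ∂μ = ∑' n, μ {ω | ∀ m ∈ S ω, n < m} := by
  have hpt (ω : Ω) :
      ⨅ m ∈ S ω, (m : ℝ≥0∞) = ∑' n, {ω | ∀ m ∈ S ω, n < m}.indicator 1 ω := by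
    rw [iInf_natCast_eq_tsum]
    exact tsum_congr fun n ↦ by unfold Set.indicator; congr
  simp_rw [hpt]
  rw [lintegral_tsum fun n ↦ (measurable_one.indicator (hS n)).aemeasurable]
  simp_rw [lintegral_indicator_one (hS _)]

/-- `p n r` is the law at time `n` of a chain on `{0, …, k - 1}` that moves to `0` with
weight `a`, from `r` to `r + 1` with weight `b`, and is killed on reaching `k`. -/
theorem tsum_sum_eq_of_lyapunov {k : ℕ} {a b : ℝ≥0∞} {p : ℕ → ℕ → ℝ≥0∞} {v : ℕ → ℝ≥0∞}
    (hp_init : ∀ r < k, p 0 r = if r = 0 then 1 else 0)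
    (hp_zero : ∀ n, p (n + 1) 0 = a * ∑ r ∈ range k, p n r)
    (hp_succ : ∀ n r, r + 1 < k → p (n + 1) (r + 1) = b * p n r)
    (hv : ∀ r < k, 1 + a * v 0 + b * v (r + 1) = v r) (hvk : v k = 0) (hv_top : ∀ r, v r ≠ ∞) :
    ∑' n, ∑ r ∈ range k, p n r = v 0 := by
  set mass : ℕ → ℝ≥0∞ := fun n ↦ ∑ r ∈ range k, p n r
  set V : ℕ → ℝ≥0∞ := fun n ↦ ∑ r ∈ range k, p n r * v r
  have hV_init : V 0 = v 0 := by
    rcases k with _ | k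
    · simp [V, hvk]
    · simp only [V]
      rw [sum_range_succ', sum_eq_zero fun r hr ↦ by simp [hp_init (r + 1) (by simpa using hr)]]
      simp [hp_init]
  have hstep (n : ℕ) : V (n + 1) + mass n = V n := by
    rcases k with _ | k
    · simp [V, mass]
    · calc V (n + 1) + mass n
          = ∑ r ∈ range k, p n r * (b * v (r + 1)) + mass n * (a * v 0) + mass n := by
            simp only [V]
            rw [sum_range_succ' (fun r ↦ p (n + 1) r * v r), hp_zero,
              sum_congr rfl fun r hr ↦ by rw [hp_succ n r (by simpa using hr)]]
            simp only [mass, mul_comm, mul_left_comm, mul_assoc]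
        _ = ∑ r ∈ range (k + 1), p n r * (1 + a * v 0 + b * v (r + 1)) := by
            simp only [mul_add, sum_add_distrib, sum_range_succ _ k, hvk, mass, ← sum_mul]
            ring
        _ = V n := sum_congr rfl fun r hr ↦ by rw [hv r (mem_range.1 hr)]
  have htelescope (N : ℕ) : ∑ n ∈ range N, mass n + V N = v 0 := by
    induction N with
    | zero => simp [hV_init]
    | succ N ih => rw [sum_range_succ, add_assoc, add_comm (mass N), hstep, ih]
  have hmass_tendsto : Tendsto mass atTop (𝓝 0) := by
    refine ENNReal.tendsto_atTop_zero_of_tsum_ne_top (ne_top_of_le_ne_top (hv_top 0) ?_)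
    exact ENNReal.tsum_le_of_sum_range_le fun N ↦ le_self_add.trans (htelescope N).le
  have hV_tendsto : Tendsto V atTop (𝓝 0) := by
    rw [show (0 : ℝ≥0∞) = ∑ r ∈ range k, 0 * v r by simp]
    refine tendsto_finsetSum _ fun r hr ↦ ENNReal.Tendsto.mul_const ?_ (.inr (hv_top r))
    exact tendsto_of_tendsto_of_tendsto_of_le_of_le tendsto_const_nhds hmass_tendsto
      (fun _ ↦ zero_le) fun n ↦ single_le_sum (fun _ _ ↦ zero_le) hr
  have := (ENNReal.tendsto_nat_tsum mass).add hV_tendsto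
  simp_rw [htelescope, add_zero] at this
  exact (tendsto_nhds_unique tendsto_const_nhds this).symm

section Past

variable {α : Type*} [MeasurableSpace α]

abbrev pastMeasurableSpace (n : ℕ) : MeasurableSpace (ℕ → α) :=
  ⨆ j ∈ Set.Iio n, MeasurableSpace.comap (fun ω : ℕ → α ↦ ω j) ‹_›

theorem pastMeasurableSpace_mono : Monotone (pastMeasurableSpace (α := α)) :=
  fun _ _ hmn ↦ biSup_mono fun _ hj ↦ lt_of_lt_of_le hj hmn

theorem pastMeasurableSpace_le (n : ℕ) : pastMeasurableSpace (α := α) n ≤ MeasurableSpace.pi :=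
  iSup₂_le fun j _ ↦ (measurable_pi_apply j).comap_le

theorem measurable_coord_pastMeasurableSpace {j n : ℕ} (hj : j < n) :
    Measurable[pastMeasurableSpace n] fun ω : ℕ → α ↦ ω j :=
  Measurable.of_comap_le (le_iSup₂_of_le j hj le_rfl)

theorem infinitePi_inter_coord_mem (P : Measure α) [IsProbabilityMeasure P] {n : ℕ}
    {E : Set (ℕ → α)} (hE : MeasurableSet[pastMeasurableSpace n] E) {s : Set α}
    (hs : MeasurableSet s) :
    Measure.infinitePi (fun _ ↦ P) (E ∩ {ω | ω n ∈ s}) =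
      Measure.infinitePi (fun _ ↦ P) E * P s := by
  have hindep := (iIndepFun_iff_iIndep _ _ _).1
    (iIndepFun_infinitePi (P := fun _ : ℕ ↦ P) (X := fun _ ↦ id) fun _ ↦ measurable_id)
  have hpast_indep_now := indep_iSup_of_disjoint (fun i ↦ (measurable_pi_apply i).comap_le)
    hindep (S := Set.Iio n) (T := {n}) (by simp)
  have hnow : MeasurableSet[⨆ j ∈ ({n} : Set ℕ),
      MeasurableSpace.comap (fun ω : ℕ → α ↦ ω j) ‹_›] {ω | ω n ∈ s} := by
    rw [_root_.iSup_singleton]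
    exact hs.preimage (comap_measurable _)
  rw [(Indep_iff _ _ _).1 hpast_indep_now E _ hE hnow]
  congr 1
  exact (measurePreserving_eval_infinitePi _ n).measure_preimage hs.nullMeasurableSet

end Past

section RunLength

variable {α : Type*} [DecidableEq α]

def runLength (χ : α) (ω : ℕ → α) : ℕ → ℕ
  | 0 => 0
  | m + 1 => if ω m = χ then 0 else runLength χ ω m + 1

def runLengthStaysBelow (χ : α) (k n : ℕ) : Set (ℕ → α) :=
  {ω | ∀ m ≤ n, runLength χ ω m < k}

variable {χ : α} {k n : ℕ}

theorem le_runLength_iff {ω : ℕ → α} {m : ℕ} :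
    k ≤ runLength χ ω m ↔ k ≤ m ∧ ∀ i < k, ω (m - 1 - i) ≠ χ := by
  induction m generalizing k with
  | zero => simp +contextual [runLength]
  | succ m ih =>
    rcases k with _ | k
    · simp
    · by_cases hm : ω m = χ
      · simpa [runLength, hm] using fun _ ↦ ⟨0, k.zero_le, hm⟩
      · simp only [runLength, hm, if_false, Nat.succ_le_succ_iff, ih, Nat.forall_lt_succ_left]
        simp [hm, Nat.sub_sub, add_comm]

theorem runLengthStaysBelow_zero_inter_runLength_eq {r : ℕ} (hr : r < k) :
    runLengthStaysBelow χ k 0 ∩ {ω | runLength χ ω 0 = r} = if r = 0 then Set.univ else ∅ := by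
  ext ω
  split_ifs with h <;> simp [runLengthStaysBelow, runLength, h, eq_comm (a := 0), hr.trans_le']

theorem runLengthStaysBelow_succ_inter_runLength_eq_zero :
    runLengthStaysBelow χ k (n + 1) ∩ {ω | runLength χ ω (n + 1) = 0} =
      runLengthStaysBelow χ k n ∩ {ω | ω n ∈ ({χ} : Set α)} := by
  ext ω
  by_cases hω : ω n = χ <;>
    simp [runLengthStaysBelow, Nat.le_succ_iff, or_imp, forall_and, runLength, hω]
  exact fun h ↦ h 0 n.zero_le

theorem runLengthStaysBelow_succ_inter_runLength_eq_succ {r : ℕ} (hr : r + 1 < k) :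
    runLengthStaysBelow χ k (n + 1) ∩ {ω | runLength χ ω (n + 1) = r + 1} =
      runLengthStaysBelow χ k n ∩ {ω | runLength χ ω n = r} ∩ {ω | ω n ∈ ({χ}ᶜ : Set α)} := by
  ext ω
  by_cases hω : ω n = χ <;>
    simp [runLengthStaysBelow, Nat.le_succ_iff, or_imp, forall_and, runLength, hω]
  rintro rfl -
  exact hr

variable [MeasurableSpace α] [MeasurableSingletonClass α]

theorem measurable_runLength_pastMeasurableSpace (χ : α) (n : ℕ) :
    Measurable[pastMeasurableSpace n] fun ω ↦ runLength χ ω n := by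
  induction n with
  | zero => exact measurable_const
  | succ n ih =>
    refine .ite ?_ measurable_const
      ((ih.mono (pastMeasurableSpace_mono n.le_succ) le_rfl).add_const 1)
    exact measurable_coord_pastMeasurableSpace n.lt_succ_self (measurableSet_singleton χ)

theorem measurableSet_runLengthStaysBelow (χ : α) (k n : ℕ) :
    MeasurableSet[pastMeasurableSpace n] (runLengthStaysBelow χ k n) := by
  simp only [runLengthStaysBelow, Set.ofPred_forall]
  refine .iInter fun m ↦ .iInter fun hm ↦ ?_
  exact (measurable_runLength_pastMeasurableSpace χ m).mono (pastMeasurableSpace_mono hm) le_rfl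
    measurableSet_Iio

theorem measurableSet_runLengthStaysBelow_inter_runLength_eq (χ : α) (k n r : ℕ) :
    MeasurableSet[pastMeasurableSpace n]
      (runLengthStaysBelow χ k n ∩ {ω | runLength χ ω n = r}) :=
  (measurableSet_runLengthStaysBelow χ k n).inter
    (measurable_runLength_pastMeasurableSpace χ n (measurableSet_singleton r))

end RunLength

section HittingTime

variable {α : Type*} [DecidableEq α] [MeasurableSpace α] [MeasurableSingletonClass α]

theorem lintegral_runLength_hittingTime_eq (P : Measure α) [IsProbabilityMeasure P] (χ : α)
    (k : ℕ) {v : ℕ → ℝ≥0∞} (hv : ∀ r < k, 1 + P {χ} * v 0 + P {χ}ᶜ * v (r + 1) = v r)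
    (hvk : v k = 0) (hv_top : ∀ r, v r ≠ ∞) :
    ∫⁻ ω, ⨅ m ∈ {m | k ≤ runLength χ ω m}, (m : ℝ≥0∞) ∂Measure.infinitePi (fun _ ↦ P) =
      v 0 := by
  set μ := Measure.infinitePi fun _ : ℕ ↦ P
  have hsurvive (n : ℕ) : {ω | ∀ m ∈ {m | k ≤ runLength χ ω m}, n < m} =
      runLengthStaysBelow χ k n := by
    ext ω
    simp only [Set.mem_ofPred_eq, runLengthStaysBelow]
    exact ⟨fun h m hm ↦ not_le.1 fun hk ↦ (h m hk).not_ge hm,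
      fun h m hk ↦ not_le.1 fun hm ↦ (h m hm).not_ge hk⟩
  have hdecomp (n : ℕ) : μ (runLengthStaysBelow χ k n) =
      ∑ r ∈ range k, μ (runLengthStaysBelow χ k n ∩ {ω | runLength χ ω n = r}) := by
    rw [← measure_biUnion_finset
      (fun r _ r' _ hrr' ↦ Set.disjoint_left.2 fun ω h h' ↦ hrr' (h.2.symm.trans h'.2))
      fun r _ ↦ pastMeasurableSpace_le n _
        (measurableSet_runLengthStaysBelow_inter_runLength_eq χ k n r)]
    congr 1
    ext ω
    simpa using fun h : ω ∈ runLengthStaysBelow χ k n ↦ h n le_rfl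
  rw [lintegral_iInf_natCast_eq_tsum μ _ fun n ↦
    hsurvive n ▸ pastMeasurableSpace_le n _ (measurableSet_runLengthStaysBelow χ k n)]
  simp_rw [hsurvive, hdecomp]
  refine tsum_sum_eq_of_lyapunov (fun r hr ↦ ?_) (fun n ↦ ?_) (fun n r hr ↦ ?_) hv hvk hv_top
  · rw [runLengthStaysBelow_zero_inter_runLength_eq hr]
    split_ifs <;> simp
  · rw [runLengthStaysBelow_succ_inter_runLength_eq_zero,
      infinitePi_inter_coord_mem P (measurableSet_runLengthStaysBelow χ k n)
        (measurableSet_singleton χ), hdecomp, mul_comm]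
  · rw [runLengthStaysBelow_succ_inter_runLength_eq_succ hr, infinitePi_inter_coord_mem P
      (measurableSet_runLengthStaysBelow_inter_runLength_eq χ k n r)
      (measurableSet_singleton χ).compl, mul_comm]

end HittingTime

noncomputable def expectedRemainingRolls (k r : ℕ) : ℝ≥0∞ :=
  ENNReal.ofReal (3 * (3 / 2) ^ k - 3 * (3 / 2) ^ r)

theorem one_add_expectedRemainingRolls {k r : ℕ} (hr : r < k) :
    1 + 3⁻¹ * expectedRemainingRolls k 0 + 2 / 3 * expectedRemainingRolls k (r + 1) =
      expectedRemainingRolls k r := by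
  have hle : (3 / 2 : ℝ) ^ (r + 1) ≤ (3 / 2) ^ k := pow_le_pow_right₀ (by norm_num) hr
  have hle0 : (3 / 2 : ℝ) ^ 0 ≤ (3 / 2) ^ k := pow_le_pow_right₀ (by norm_num) k.zero_le
  rw [expectedRemainingRolls, expectedRemainingRolls, expectedRemainingRolls,
    show (3 : ℝ≥0∞)⁻¹ = ENNReal.ofReal 3⁻¹ by rw [ENNReal.ofReal_inv_of_pos] <;> norm_num,
    show (2 / 3 : ℝ≥0∞) = ENNReal.ofReal (2 / 3) by rw [ENNReal.ofReal_div_of_pos] <;> norm_num,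
    ← ENNReal.ofReal_one, ← ENNReal.ofReal_mul (by norm_num), ← ENNReal.ofReal_mul (by norm_num),
    ← ENNReal.ofReal_add (by norm_num) (by nlinarith),
    ← ENNReal.ofReal_add (by nlinarith) (by nlinarith)]
  congr 1
  ring

theorem expectedRemainingRolls_self (k : ℕ) : expectedRemainingRolls k k = 0 := by
  simp [expectedRemainingRolls]

theorem expectedRemainingRolls_zero (k : ℕ) :
    expectedRemainingRolls k 0 = 3 * (3 / 2) ^ k - 3 := by
  rw [expectedRemainingRolls, pow_zero, mul_one, ENNReal.ofReal_sub _ (by norm_num),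
    ENNReal.ofReal_mul (by norm_num), ENNReal.ofReal_pow (by norm_num),
    ENNReal.ofReal_div_of_pos (by norm_num)]
  norm_num

theorem expected_rolls_for_run_of_nonChi_general (χ : Fin 3) (k : ℕ)
    (μ : Measure (ℕ → Fin 3))
    (hμ : IsProjectiveLimit μ
      (fun J : Finset ℕ => Measure.pi fun _ : J => (PMF.uniformOfFintype (Fin 3)).toMeasure))
    (T : (ℕ → Fin 3) → ℝ≥0∞)
    (hT : ∀ ω, T ω = ⨅ m ∈ {m : ℕ | k ≤ m ∧ ∀ i < k, ω (m - 1 - i) ≠ χ}, (m : ℝ≥0∞)) :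
    ∫⁻ ω, T ω ∂μ = 3 * (3 / 2) ^ k - 3 := by
  set P := (PMF.uniformOfFintype (Fin 3)).toMeasure
  obtain rfl : μ = Measure.infinitePi fun _ ↦ P :=
    hμ.unique (Measure.isProjectiveLimit_infinitePi _)
  obtain rfl : T = fun ω ↦ ⨅ m ∈ {m | k ≤ runLength χ ω m}, (m : ℝ≥0∞) :=
    funext fun ω ↦ by simp_rw [hT ω, le_runLength_iff]
  have hP_eq : P {χ} = 3⁻¹ := by simp [P]
  have hP_compl : P {χ}ᶜ = 2 / 3 := by
    rw [PMF.toMeasure_uniformOfFintype_apply _ (measurableSet_singleton χ).compl]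
    simp [filter_ne']
  rw [lintegral_runLength_hittingTime_eq P χ k
    (fun r hr ↦ by rw [hP_eq, hP_compl]; exact one_add_expectedRemainingRolls hr)
    (expectedRemainingRolls_self k) (fun _ ↦ ofReal_ne_top), expectedRemainingRolls_zero]

/-- Fix `χ : Fin 3` and `k : ℕ`. Let `μ` be the infinite product probability measure on
`ℕ → Fin 3` whose factors are each the uniform probability measure on `Fin 3` (i.i.d. rolls
of a fair three-sided die); this is expressed by saying that `μ` is a probability measure
whose finite-dimensional projections are the finite products of the uniform measure on
`Fin 3`. For `ω : ℕ → Fin 3`, let `T ω` be the least natural number `m` with `m ≥ k` and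
`ω (m - 1 - i) ≠ χ` for all `i < k` (the number of rolls needed until an uninterrupted run
of `k` consecutive outcomes all different from `χ`), valued `+∞` in `ℝ≥0∞` if no such `m`
exists. Then the expected value of `T` with respect to `μ` is `3 * (3 / 2) ^ k - 3`. -/
theorem expected_rolls_for_run_of_nonChi (χ : Fin 3) (k : ℕ)
    (μ : Measure (ℕ → Fin 3)) [IsProbabilityMeasure μ]
    (hμ : IsProjectiveLimit μ
      (fun J : Finset ℕ => Measure.pi fun _ : J => (PMF.uniformOfFintype (Fin 3)).toMeasure))
    (T : (ℕ → Fin 3) → ℝ≥0∞)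
    (hT : ∀ ω, T ω = ⨅ m ∈ {m : ℕ | k ≤ m ∧ ∀ i < k, ω (m - 1 - i) ≠ χ}, (m : ℝ≥0∞)) :
    ∫⁻ ω, T ω ∂μ = 3 * (3 / 2) ^ k - 3 :=
  expected_rolls_for_run_of_nonChi_general χ k μ hμ T hT
end
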